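/- For every real number μ ≥ 4, the logistic map F_μ maps Λ_μ into itself and the restriction of F_μ to Λ_μ is chaotic; that is, there exists δ > 0 such that for every point x ∈ Λ_μ and every nonempty (relatively) open set V ⊆ Λ_μ there is a point y ∈ V with limsup_{n→∞} |F_μⁿ(x) − F_μⁿ(y)| ≥ δ and liminf_{n→∞} |F_μⁿ(x) − F_μⁿ(y)| = 0. -/

import Mathlib

open Filter

/-- The logistic map `F_μ(x) = μ x (1 - x)`. -/
noncomputable def logisticMap (μ : ℝ) (x : ℝ) : ℝ := μ * x * (1 - x)

/-- `Λ_μ = ⋂ₙ F_μ⁻ⁿ([0,1])`. -/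
noncomputable def logisticLambda (μ : ℝ) : Set ℝ :=
  ⋂ n : ℕ, (logisticMap μ)^[n] ⁻¹' Set.Icc 0 1

/-!
In the coordinate `θ x = arcsin √x ∈ [0, π / 2]` the two inverse branches of `F_4` on `[0, 1]`
become `θ ↦ θ / 2` and `θ ↦ π / 2 - θ / 2`; for `μ > 4` they are these branches precomposed with
`t ↦ 4 t / μ`, which does not expand `θ`-distances. So composing `n` inverse branches contracts
by `2⁻ⁿ`: every binary word `w` codes a point `φ w`, `φ` maps onto `Λ_μ` and turns the shift into
`F_μ`, and words sharing their first `n` symbols code points at distance at most `π / 2ⁿ⁺¹`.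

Chaos is then a statement about words. Given `x = φ a` and an open set around `φ c`, take the
word that starts like `c` and, on each later block `[s², (s + 1)²)`, first repeats `N` times a
symbol whose constant word codes a point far from `F^{s²} x`, and then copies `a`: the runs keep
the orbits `δ` apart infinitely often, the ever longer copies bring them arbitrarily close.
-/

open Real Set Topology

theorem eventually_div_two_pow_lt (C : ℝ) {ε : ℝ} (hε : 0 < ε) :
    ∀ᶠ n : ℕ in atTop, C / 2 ^ n < ε :=
  (tendsto_const_nhds.div_atTop (tendsto_pow_atTop_atTop_of_one_lt one_lt_two)).eventually
    (gt_mem_nhds hε)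

theorem liminf_eq_zero_of_frequently_le {ι : Type*} {l : Filter ι} [l.NeBot] {u : ι → ℝ}
    {B : ℝ} (h₀ : ∀ i, 0 ≤ u i) (hB : ∀ i, u i ≤ B) (h : ∀ ε > 0, ∃ᶠ i in l, u i ≤ ε) :
    liminf u l = 0 := by
  refine le_antisymm (le_of_forall_pos_le_add fun ε hε => ?_)
    (le_liminf_of_le (isBoundedUnder_of ⟨B, hB⟩).isCoboundedUnder_ge (.of_forall h₀))
  rw [zero_add]
  exact liminf_le_of_frequently_le (h ε hε) (isBoundedUnder_of ⟨0, h₀⟩)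

section ShiftCoding

variable {α : Type*} [PseudoMetricSpace α]

structure IsShiftCoding (f : α → α) (φ : (ℕ → Bool) → α) (C : ℝ) : Prop where
  map_shift (w : ℕ → Bool) : f (φ w) = φ fun n => w (n + 1)
  dist_le (n : ℕ) {w w' : ℕ → Bool} : (∀ j < n, w j = w' j) → dist (φ w) (φ w') ≤ C / 2 ^ n

noncomputable def farSymbol (φ : (ℕ → Bool) → α) (q : α) : Bool :=
  decide (dist q (φ fun _ => false) < dist q (φ fun _ => true))

theorem dist_farSymbol_ge (φ : (ℕ → Bool) → α) (q : α) :
    dist (φ fun _ => false) (φ fun _ => true) / 2 ≤ dist q (φ fun _ => farSymbol φ q) := by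
  have := dist_triangle_left (φ fun _ => false) (φ fun _ => true) q
  by_cases hq : dist q (φ fun _ => false) < dist q (φ fun _ => true)
  · simp only [farSymbol, hq, decide_true]; linarith
  · simp only [farSymbol, hq, decide_false]; linarith [not_lt.1 hq]

noncomputable def scrambledWord (f : α → α) (φ : (ℕ → Bool) → α)
    (a c : ℕ → Bool) (k N n : ℕ) : Bool :=
  if n < k then c n
  else if n - n.sqrt * n.sqrt < N then farSymbol φ (f^[n.sqrt * n.sqrt] (φ a)) else a n

section

variable {f : α → α} {φ : (ℕ → Bool) → α} {a c : ℕ → Bool} {k N s j : ℕ}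

theorem scrambledWord_of_lt (hj : j < k) : scrambledWord f φ a c k N j = c j := by
  simp [scrambledWord, hj]

theorem scrambledWord_far (hk : k ≤ s * s) (hjN : j < N) (hjs : j ≤ s + s) :
    scrambledWord f φ a c k N (s * s + j) = farSymbol φ (f^[s * s] (φ a)) := by
  simp [scrambledWord, Nat.sqrt_add_eq s hjs, hjN, show ¬ s * s + j < k by omega]

theorem scrambledWord_copy (hk : k ≤ s * s) (hNj : N ≤ j) (hjs : j ≤ s + s) :
    scrambledWord f φ a c k N (s * s + j) = a (s * s + j) := by
  simp [scrambledWord, Nat.sqrt_add_eq s hjs, show ¬ j < N by omega,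
    show ¬ s * s + j < k by omega]

end

namespace IsShiftCoding

variable {f : α → α} {φ : (ℕ → Bool) → α} {C : ℝ}

theorem iterate_map_shift (h : IsShiftCoding f φ C) (n : ℕ) (w : ℕ → Bool) :
    f^[n] (φ w) = φ fun i => w (n + i) := by
  induction n generalizing w with
  | zero => simp
  | succ n ih =>
    rw [Function.iterate_succ_apply, h.map_shift, ih]
    simp only [Nat.add_right_comm]

theorem dist_le_const (h : IsShiftCoding f φ C) (w w' : ℕ → Bool) : dist (φ w) (φ w') ≤ C := by
  simpa using h.dist_le 0 (w := w) (w' := w') (by simp)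

theorem dist_iterate_scrambledWord_far (h : IsShiftCoding f φ C) (a c : ℕ → Bool) {k N s : ℕ}
    (hk : k ≤ s * s) (hN : N ≤ s + s + 1) :
    dist (φ fun _ => false) (φ fun _ => true) / 2 - C / 2 ^ N ≤
      dist (f^[s * s] (φ a)) (f^[s * s] (φ (scrambledWord f φ a c k N))) := by
  set q := f^[s * s] (φ a)
  have hclose := h.dist_le N (w := fun j => scrambledWord f φ a c k N (s * s + j))
    (w' := fun _ => farSymbol φ q) fun j hj => scrambledWord_far hk hj (by omega)
  rw [← h.iterate_map_shift] at hclose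
  linarith [dist_farSymbol_ge φ q, dist_triangle q (f^[s * s] (φ (scrambledWord f φ a c k N)))
    (φ fun _ => farSymbol φ q)]

theorem dist_iterate_scrambledWord_copy_le (h : IsShiftCoding f φ C) (a c : ℕ → Bool)
    {k N s : ℕ} (hk : k ≤ s * s) (hN : N ≤ s + 1) :
    dist (f^[s * s + N] (φ a)) (f^[s * s + N] (φ (scrambledWord f φ a c k N))) ≤ C / 2 ^ s := by
  rw [h.iterate_map_shift, h.iterate_map_shift]
  refine h.dist_le s fun j hj => ?_
  rw [add_assoc, scrambledWord_copy hk (by omega) (by omega)]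

end IsShiftCoding

end ShiftCoding

theorem IsShiftCoding.exists_scrambled {α : Type*} [MetricSpace α] {f : α → α}
    {φ : (ℕ → Bool) → α} {C : ℝ} (h : IsShiftCoding f φ C) (hne : φ (fun _ => false) ≠ φ (fun _ => true)) :
    ∃ δ > 0, ∀ a c : ℕ → Bool, ∀ ε > 0, ∃ w, dist (φ w) (φ c) < ε ∧
      δ ≤ limsup (fun n => dist (f^[n] (φ a)) (f^[n] (φ w))) atTop ∧
      liminf (fun n => dist (f^[n] (φ a)) (f^[n] (φ w))) atTop = 0 := by
  set D := dist (φ fun _ => false) (φ fun _ => true)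
  have hD : 0 < D := dist_pos.2 hne
  obtain ⟨N, hN⟩ := (eventually_div_two_pow_lt C (by positivity : 0 < D / 4)).exists
  refine ⟨D / 4, by positivity, fun a c ε hε => ?_⟩
  obtain ⟨k, hk⟩ := (eventually_div_two_pow_lt C hε).exists
  set w := scrambledWord f φ a c k N
  have hbound : ∀ n, dist (f^[n] (φ a)) (f^[n] (φ w)) ≤ C := fun n => by
    rw [h.iterate_map_shift, h.iterate_map_shift]; exact h.dist_le_const _ _
  have hlarge : ∀ n₀ : ℕ, ∃ s ≥ n₀, k ≤ s * s ∧ N ≤ s := fun n₀ =>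
    ⟨max n₀ (max k N), by omega, (by omega : k ≤ _).trans (Nat.le_mul_self _), by omega⟩
  refine ⟨w, (h.dist_le k fun j hj => scrambledWord_of_lt hj).trans_lt hk, ?_, ?_⟩
  · refine le_limsup_of_frequently_le (frequently_atTop.2 fun n₀ => ?_)
      (isBoundedUnder_of ⟨C, hbound⟩)
    obtain ⟨s, hs, hks, hNs⟩ := hlarge n₀
    refine ⟨s * s, hs.trans (Nat.le_mul_self s), ?_⟩
    linarith [h.dist_iterate_scrambledWord_far a c hks (by omega : N ≤ s + s + 1)]
  · refine liminf_eq_zero_of_frequently_le (fun _ => dist_nonneg) hbound fun ε' hε' => ?_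
    obtain ⟨s₀, hs₀⟩ := eventually_atTop.1 (eventually_div_two_pow_lt C hε')
    refine frequently_atTop.2 fun n₀ => ?_
    obtain ⟨s, hs, hks, hNs⟩ := hlarge (max n₀ s₀)
    refine ⟨s * s + N, by have := Nat.le_mul_self s; omega, ?_⟩
    exact (h.dist_iterate_scrambledWord_copy_le a c hks (by omega)).trans (hs₀ s (by omega)).le

theorem arcsin_sqrt_one_sub_sqrt_one_sub_div_two {s : ℝ} (hs₀ : 0 ≤ s) :
    arcsin √((1 - √(1 - s)) / 2) = arcsin √s / 2 := by
  set ψ := arcsin √s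
  have hψ₀ : 0 ≤ ψ := arcsin_nonneg.2 (sqrt_nonneg s)
  have hψ₁ : ψ ≤ π / 2 := arcsin_le_pi_div_two _
  have hhalf : (1 - √(1 - s)) / 2 = sin (ψ / 2) ^ 2 := by
    rw [← sq_sqrt hs₀, ← cos_arcsin, sin_sq, cos_sq, mul_div_cancel₀ _ two_ne_zero]
    ring
  rw [hhalf, sqrt_sq (sin_nonneg_of_nonneg_of_le_pi (by linarith) (by linarith [pi_pos])),
    arcsin_sin (by linarith [pi_pos]) (by linarith)]

theorem arcsin_sqrt_one_add_sqrt_one_sub_div_two {s : ℝ} (hs₀ : 0 ≤ s) :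
    arcsin √((1 + √(1 - s)) / 2) = π / 2 - arcsin √s / 2 := by
  set ψ := arcsin √s
  have hψ₀ : 0 ≤ ψ := arcsin_nonneg.2 (sqrt_nonneg s)
  have hψ₁ : ψ ≤ π / 2 := arcsin_le_pi_div_two _
  have hhalf : (1 + √(1 - s)) / 2 = sin (π / 2 - ψ / 2) ^ 2 := by
    rw [sin_pi_div_two_sub, ← sq_sqrt hs₀, ← cos_arcsin, cos_sq (ψ / 2),
      mul_div_cancel₀ _ two_ne_zero]
    ring
  rw [hhalf, sqrt_sq (sin_nonneg_of_nonneg_of_le_pi (by linarith) (by linarith [pi_pos])),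
    arcsin_sin (by linarith [pi_pos]) (by linarith)]

theorem abs_arcsin_mul_sub_arcsin_mul_le {c u v : ℝ} (hc₀ : 0 ≤ c) (hc₁ : c ≤ 1)
    (hu : u ∈ Icc (0 : ℝ) 1) (hv : v ∈ Icc (0 : ℝ) 1) :
    |arcsin (c * u) - arcsin (c * v)| ≤ |arcsin u - arcsin v| := by
  have hmono : MonotoneOn (fun x => arcsin x - arcsin (c * x)) (Icc 0 1) := by
    refine monotoneOn_of_hasDerivWithinAt_nonneg (convex_Icc 0 1) (by fun_prop)
      (f' := fun x => 1 / √(1 - x ^ 2) - 1 / √(1 - (c * x) ^ 2) * c) (fun x hx => ?_)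
      (fun x hx => ?_)
    all_goals
      rw [interior_Icc] at hx
      have hcx : c * x < 1 := by nlinarith [hx.1, hx.2]
    · exact ((hasDerivAt_arcsin (by linarith [hx.1]) hx.2.ne).sub
        ((hasDerivAt_arcsin (by nlinarith [hx.1]) hcx.ne).comp x
          ((hasDerivAt_id x).const_mul c |>.congr_deriv (mul_one c)))).hasDerivWithinAt
    · have hsq : 0 < √(1 - x ^ 2) := sqrt_pos.2 (by nlinarith [hx.1, hx.2])
      have hcx' : c * x ≤ x := mul_le_of_le_one_left hx.1.le hc₁
      have hle : √(1 - x ^ 2) ≤ √(1 - (c * x) ^ 2) :=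
        sqrt_le_sqrt (by nlinarith [mul_nonneg hc₀ hx.1.le])
      refine sub_nonneg.2 ?_
      calc 1 / √(1 - (c * x) ^ 2) * c ≤ 1 / √(1 - (c * x) ^ 2) := by
            have := one_div_nonneg.2 (sqrt_nonneg (1 - (c * x) ^ 2))
            nlinarith
        _ ≤ 1 / √(1 - x ^ 2) := one_div_le_one_div_of_le hsq hle
  have key : ∀ {u v : ℝ}, u ∈ Icc (0 : ℝ) 1 → v ∈ Icc (0 : ℝ) 1 → v ≤ u →
      |arcsin (c * u) - arcsin (c * v)| ≤ |arcsin u - arcsin v| := by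
    intro u v hu hv hvu
    have h1 := hmono hv hu hvu
    have h2 : arcsin (c * v) ≤ arcsin (c * u) := arcsin_le_arcsin (by nlinarith)
    simp only at h1
    rw [abs_of_nonneg (by linarith), abs_of_nonneg (by linarith)]
    linarith
  rcases le_total v u with hvu | huv
  · exact key hu hv hvu
  · rw [abs_sub_comm, abs_sub_comm (arcsin u)]
    exact key hv hu huv

theorem abs_sub_le_abs_arcsin_sqrt_sub {x y : ℝ} (hx : x ∈ Icc (0 : ℝ) 1)
    (hy : y ∈ Icc (0 : ℝ) 1) : |x - y| ≤ |arcsin √x - arcsin √y| := by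
  have hsin : ∀ z ∈ Icc (0 : ℝ) 1, z = 1 / 2 - cos (2 * arcsin √z) / 2 := by
    intro z hz
    have hz' : sin (arcsin √z) ^ 2 = z := by
      rw [sin_arcsin (by linarith [sqrt_nonneg z]) (sqrt_le_one.2 hz.2), sq_sqrt hz.1]
    linarith [cos_sq (arcsin √z), sin_sq_add_cos_sq (arcsin √z)]
  calc |x - y| = |cos (2 * arcsin √y) - cos (2 * arcsin √x)| / 2 := by
        rw [show x - y = (cos (2 * arcsin √y) - cos (2 * arcsin √x)) / 2 by
          linarith [hsin x hx, hsin y hy], abs_div, abs_two]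
    _ ≤ |2 * arcsin √y - 2 * arcsin √x| / 2 := by
        linarith [abs_cos_sub_cos_le (2 * arcsin √y) (2 * arcsin √x)]
    _ = |arcsin √x - arcsin √y| := by
        rw [← mul_sub, abs_mul, abs_two, abs_sub_comm]; ring

/-- The inverse branches of `logisticMap μ`, onto `[0, 1/2]` (`false`) and `[1/2, 1]` (`true`). -/
noncomputable def logisticBranch (μ : ℝ) (b : Bool) (t : ℝ) : ℝ :=
  if b then (1 + √(1 - 4 * t / μ)) / 2 else (1 - √(1 - 4 * t / μ)) / 2

section Logistic

variable {μ : ℝ}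

theorem logisticMap_logisticBranch (hμ : 0 < μ) {t : ℝ} (ht : 4 * t ≤ μ) (b : Bool) :
    logisticMap μ (logisticBranch μ b t) = t := by
  have hs : √(1 - 4 * t / μ) ^ 2 = 1 - 4 * t / μ :=
    sq_sqrt (by rw [sub_nonneg, div_le_one hμ]; exact ht)
  have key : 4 * t = μ * (1 - √(1 - 4 * t / μ) ^ 2) := by rw [hs]; field_simp; ring
  cases b <;> simp only [logisticBranch, logisticMap, Bool.false_eq_true, if_true, if_false] <;>
    linear_combination -key / 4

theorem logisticBranch_logisticMap (hμ : μ ≠ 0) (x : ℝ) :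
    logisticBranch μ (decide (1 / 2 ≤ x)) (logisticMap μ x) = x := by
  have hsq : 1 - 4 * logisticMap μ x / μ = (2 * x - 1) ^ 2 := by
    simp only [logisticMap]; field_simp; ring
  rw [logisticBranch, hsq, sqrt_sq_eq_abs]
  by_cases hx : 1 / 2 ≤ x
  · simp only [hx, decide_true, if_true]; rw [abs_of_nonneg (by linarith)]; ring
  · simp only [hx, decide_false, Bool.false_eq_true, if_false]
    rw [abs_of_neg (by linarith)]; ring

theorem logisticBranch_mem_Icc (hμ : 0 ≤ μ) {t : ℝ} (ht : 0 ≤ t) (b : Bool) :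
    logisticBranch μ b t ∈ Icc 0 1 := by
  have h₀ := sqrt_nonneg (1 - 4 * t / μ)
  have h₁ : √(1 - 4 * t / μ) ≤ 1 :=
    sqrt_le_one.2 (by linarith [div_nonneg (by linarith : 0 ≤ 4 * t) hμ])
  cases b <;> simp only [logisticBranch, Bool.false_eq_true, if_true, if_false, mem_Icc] <;>
    constructor <;> linarith

theorem one_half_le_logisticBranch_true (μ t : ℝ) : 1 / 2 ≤ logisticBranch μ true t := by
  simp only [logisticBranch, if_true]; linarith [sqrt_nonneg (1 - 4 * t / μ)]

theorem logisticBranch_false_zero (μ : ℝ) : logisticBranch μ false 0 = 0 := by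
  simp [logisticBranch]

theorem continuous_logisticBranch (μ : ℝ) (b : Bool) : Continuous (logisticBranch μ b) := by
  unfold logisticBranch; cases b <;> simp only [Bool.false_eq_true, if_true, if_false] <;> fun_prop

theorem abs_arcsin_sqrt_logisticBranch_sub_le (hμ : 4 ≤ μ) {t t' : ℝ} (ht : t ∈ Icc (0 : ℝ) 1)
    (ht' : t' ∈ Icc (0 : ℝ) 1) (b : Bool) :
    |arcsin √(logisticBranch μ b t) - arcsin √(logisticBranch μ b t')| ≤
      |arcsin √t - arcsin √t'| / 2 := by
  have hμ₀ : 0 < μ := by linarith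
  have hscale : ∀ t ∈ Icc (0 : ℝ) 1, 0 ≤ 4 * t / μ ∧ √(4 * t / μ) = √(4 / μ) * √t :=
    fun t ht => ⟨by positivity [ht.1], by rw [← sqrt_mul (by positivity), div_mul_eq_mul_div]⟩
  have hhalf : |arcsin √(logisticBranch μ b t) - arcsin √(logisticBranch μ b t')| =
      |arcsin √(4 * t / μ) - arcsin √(4 * t' / μ)| / 2 := by
    cases b <;> simp only [logisticBranch, Bool.false_eq_true, if_true, if_false]
    · rw [arcsin_sqrt_one_sub_sqrt_one_sub_div_two (hscale t ht).1,
        arcsin_sqrt_one_sub_sqrt_one_sub_div_two (hscale t' ht').1, ← sub_div, abs_div, abs_two]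
    · rw [arcsin_sqrt_one_add_sqrt_one_sub_div_two (hscale t ht).1,
        arcsin_sqrt_one_add_sqrt_one_sub_div_two (hscale t' ht').1, sub_sub_sub_cancel_left,
        ← sub_div, abs_div, abs_two, abs_sub_comm]
  rw [hhalf, (hscale t ht).2, (hscale t' ht').2]
  refine div_le_div_of_nonneg_right ?_ zero_le_two
  exact abs_arcsin_mul_sub_arcsin_mul_le (sqrt_nonneg _)
    (sqrt_le_one.2 ((div_le_one hμ₀).2 hμ)) ⟨sqrt_nonneg t, sqrt_le_one.2 ht.2⟩
    ⟨sqrt_nonneg t', sqrt_le_one.2 ht'.2⟩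

/-- `g_{w 0} ∘ ⋯ ∘ g_{w (n - 1)}`, where `g_b = logisticBranch μ b`. -/
noncomputable def logisticBranchComp (μ : ℝ) (w : ℕ → Bool) : ℕ → ℝ → ℝ
  | 0, t => t
  | n + 1, t => logisticBranchComp μ w n (logisticBranch μ (w n) t)

theorem logisticBranchComp_mem_Icc (hμ : 0 ≤ μ) (w : ℕ → Bool) (n : ℕ) {t : ℝ}
    (ht : t ∈ Icc (0 : ℝ) 1) : logisticBranchComp μ w n t ∈ Icc (0 : ℝ) 1 := by
  induction n generalizing t with
  | zero => exact ht
  | succ n ih => exact ih (logisticBranch_mem_Icc hμ ht.1 _)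

theorem logisticBranchComp_succ' (μ : ℝ) (w : ℕ → Bool) (n : ℕ) (t : ℝ) :
    logisticBranchComp μ w (n + 1) t =
      logisticBranch μ (w 0) (logisticBranchComp μ (fun i => w (i + 1)) n t) := by
  induction n generalizing t with
  | zero => rfl
  | succ n ih => exact ih _

theorem logisticBranchComp_congr {w w' : ℕ → Bool} {n : ℕ} (h : ∀ j < n, w j = w' j) :
    logisticBranchComp μ w n = logisticBranchComp μ w' n := by
  induction n with
  | zero => rfl
  | succ n ih =>
    funext t
    simp only [logisticBranchComp, h n n.lt_succ_self, ih fun j hj => h j (by omega)]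

theorem eq_logisticBranchComp_of_forall {w : ℕ → Bool} {z : ℕ → ℝ}
    (hz : ∀ n, z n = logisticBranch μ (w n) (z (n + 1))) (n : ℕ) :
    z 0 = logisticBranchComp μ w n (z n) := by
  induction n with
  | zero => rfl
  | succ n ih => rw [ih, hz n]; rfl

theorem abs_arcsin_sqrt_logisticBranchComp_sub_le (hμ : 4 ≤ μ) (w : ℕ → Bool) (n : ℕ)
    {t t' : ℝ} (ht : t ∈ Icc (0 : ℝ) 1) (ht' : t' ∈ Icc (0 : ℝ) 1) :
    |arcsin √(logisticBranchComp μ w n t) - arcsin √(logisticBranchComp μ w n t')| ≤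
      |arcsin √t - arcsin √t'| / 2 ^ n := by
  induction n generalizing t t' with
  | zero => simp [logisticBranchComp]
  | succ n ih =>
    have hμ₀ : 0 ≤ μ := by linarith
    calc _ ≤ |arcsin √(logisticBranch μ (w n) t) - arcsin √(logisticBranch μ (w n) t')| / 2 ^ n :=
          ih (logisticBranch_mem_Icc hμ₀ ht.1 _) (logisticBranch_mem_Icc hμ₀ ht'.1 _)
      _ ≤ |arcsin √t - arcsin √t'| / 2 / 2 ^ n :=
          div_le_div_of_nonneg_right (abs_arcsin_sqrt_logisticBranch_sub_le hμ ht ht' _)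
            (by positivity)
      _ = |arcsin √t - arcsin √t'| / 2 ^ (n + 1) := by rw [pow_succ]; ring

theorem abs_logisticBranchComp_sub_le (hμ : 4 ≤ μ) (w : ℕ → Bool) (n : ℕ) {t t' : ℝ}
    (ht : t ∈ Icc (0 : ℝ) 1) (ht' : t' ∈ Icc (0 : ℝ) 1) :
    |logisticBranchComp μ w n t - logisticBranchComp μ w n t'| ≤ π / 2 / 2 ^ n := by
  have hμ₀ : 0 ≤ μ := by linarith
  have hangle : |arcsin √t - arcsin √t'| ≤ π / 2 := by
    have := arcsin_le_pi_div_two √t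
    have := arcsin_le_pi_div_two √t'
    have := arcsin_nonneg.2 (sqrt_nonneg t)
    have := arcsin_nonneg.2 (sqrt_nonneg t')
    exact abs_sub_le_iff.2 ⟨by linarith, by linarith⟩
  exact (abs_sub_le_abs_arcsin_sqrt_sub (logisticBranchComp_mem_Icc hμ₀ w n ht)
    (logisticBranchComp_mem_Icc hμ₀ w n ht')).trans <|
    (abs_arcsin_sqrt_logisticBranchComp_sub_le hμ w n ht ht').trans <|
    div_le_div_of_nonneg_right hangle (by positivity)

/-- The point with itinerary `w`. -/
noncomputable def logisticCoding (μ : ℝ) (w : ℕ → Bool) : ℝ :=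
  limUnder atTop fun n => logisticBranchComp μ w n 0

theorem tendsto_logisticCoding (hμ : 4 ≤ μ) (w : ℕ → Bool) :
    Tendsto (fun n => logisticBranchComp μ w n 0) atTop (𝓝 (logisticCoding μ w)) := by
  have h01 : (0 : ℝ) ∈ Icc (0 : ℝ) 1 := ⟨le_rfl, zero_le_one⟩
  refine (cauchySeq_of_le_geometric_two (C := π) fun n => ?_).tendsto_limUnder
  rw [Real.dist_eq]
  exact abs_logisticBranchComp_sub_le hμ w n h01 (logisticBranch_mem_Icc (by linarith) le_rfl _)

theorem logisticCoding_mem_Icc (hμ : 4 ≤ μ) (w : ℕ → Bool) :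
    logisticCoding μ w ∈ Icc (0 : ℝ) 1 :=
  isClosed_Icc.mem_of_tendsto (tendsto_logisticCoding hμ w) <| .of_forall fun n =>
    logisticBranchComp_mem_Icc (by linarith) w n ⟨le_rfl, zero_le_one⟩

theorem logisticCoding_eq_logisticBranch (hμ : 4 ≤ μ) (w : ℕ → Bool) :
    logisticCoding μ w = logisticBranch μ (w 0) (logisticCoding μ fun i => w (i + 1)) := by
  refine tendsto_nhds_unique ((tendsto_logisticCoding hμ w).comp (tendsto_add_atTop_nat 1)) ?_
  simp only [Function.comp_def, logisticBranchComp_succ']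
  exact ((continuous_logisticBranch μ (w 0)).tendsto _).comp (tendsto_logisticCoding hμ _)

theorem logisticCoding_eq_logisticBranchComp (hμ : 4 ≤ μ) (w : ℕ → Bool) (n : ℕ) :
    logisticCoding μ w = logisticBranchComp μ w n (logisticCoding μ fun i => w (n + i)) := by
  simpa using eq_logisticBranchComp_of_forall (μ := μ) (w := w)
    (z := fun m => logisticCoding μ fun i => w (m + i)) (fun m => by
      rw [logisticCoding_eq_logisticBranch hμ]
      simp only [add_zero, ← add_assoc, Nat.add_right_comm _ _ 1]) n

theorem isShiftCoding_logisticCoding (hμ : 4 ≤ μ) :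
    IsShiftCoding (logisticMap μ) (logisticCoding μ) (π / 2) where
  map_shift w := by
    rw [logisticCoding_eq_logisticBranch hμ w, logisticMap_logisticBranch (by linarith)
      (by linarith [(logisticCoding_mem_Icc hμ fun i => w (i + 1)).2])]
  dist_le n w w' hww' := by
    rw [Real.dist_eq, logisticCoding_eq_logisticBranchComp hμ w n,
      logisticCoding_eq_logisticBranchComp hμ w' n, logisticBranchComp_congr hww']
    exact abs_logisticBranchComp_sub_le hμ _ _ (logisticCoding_mem_Icc hμ _)
      (logisticCoding_mem_Icc hμ _)

theorem logisticCoding_const_false_ne_const_true (hμ : 4 ≤ μ) :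
    logisticCoding μ (fun _ => false) ≠ logisticCoding μ (fun _ => true) := by
  have hfalse : ∀ n, logisticBranchComp μ (fun _ => false) n 0 = 0 := by
    intro n
    induction n with
    | zero => rfl
    | succ n ih => simp only [logisticBranchComp, logisticBranch_false_zero, ih]
  have htrue : 1 / 2 ≤ logisticCoding μ fun _ => true := by
    rw [logisticCoding_eq_logisticBranch hμ]
    exact one_half_le_logisticBranch_true _ _
  rw [logisticCoding, funext hfalse, tendsto_const_nhds.limUnder_eq]
  linarith

theorem mem_logisticLambda {x : ℝ} :
    x ∈ logisticLambda μ ↔ ∀ n, (logisticMap μ)^[n] x ∈ Icc (0 : ℝ) 1 := by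
  simp [logisticLambda]

theorem mapsTo_logisticMap_logisticLambda (μ : ℝ) :
    MapsTo (logisticMap μ) (logisticLambda μ) (logisticLambda μ) := fun x hx =>
  mem_logisticLambda.2 fun n => by
    rw [← Function.iterate_succ_apply]; exact mem_logisticLambda.1 hx (n + 1)

theorem range_logisticCoding (hμ : 4 ≤ μ) : range (logisticCoding μ) = logisticLambda μ := by
  refine Subset.antisymm ?_ fun x hx => ?_
  · rintro _ ⟨w, rfl⟩
    exact mem_logisticLambda.2 fun n =>
      (isShiftCoding_logisticCoding hμ).iterate_map_shift n w ▸ logisticCoding_mem_Icc hμ _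
  set w : ℕ → Bool := fun n => decide (1 / 2 ≤ (logisticMap μ)^[n] x)
  have hx_eq (n : ℕ) : x = logisticBranchComp μ w n ((logisticMap μ)^[n] x) :=
    eq_logisticBranchComp_of_forall (z := fun m => (logisticMap μ)^[m] x) (fun m => by
      rw [Function.iterate_succ_apply', logisticBranch_logisticMap (by linarith)]) n
  refine ⟨w, eq_of_forall_dist_le fun ε hε => ?_⟩
  obtain ⟨n, hn⟩ := (eventually_div_two_pow_lt (π / 2) hε).exists
  rw [Real.dist_eq, logisticCoding_eq_logisticBranchComp hμ w n, hx_eq n]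
  exact (abs_logisticBranchComp_sub_le hμ w n (logisticCoding_mem_Icc hμ _)
    (mem_logisticLambda.1 hx n)).trans hn.le

end Logistic

theorem logistic_chaotic_on_lambda (μ : ℝ) (hμ : 4 ≤ μ) :
    Set.MapsTo (logisticMap μ) (logisticLambda μ) (logisticLambda μ) ∧
    ∃ δ : ℝ, 0 < δ ∧
      ∀ x ∈ logisticLambda μ, ∀ V : Set ℝ, V ⊆ logisticLambda μ →
        (∃ U : Set ℝ, IsOpen U ∧ V = logisticLambda μ ∩ U) → V.Nonempty →
        ∃ y ∈ V,
          δ ≤ limsup (fun n => |(logisticMap μ)^[n] x - (logisticMap μ)^[n] y|) atTop ∧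
          liminf (fun n => |(logisticMap μ)^[n] x - (logisticMap μ)^[n] y|) atTop = 0 := by
  refine ⟨mapsTo_logisticMap_logisticLambda μ, ?_⟩
  obtain ⟨δ, hδ, hscrambled⟩ := (isShiftCoding_logisticCoding hμ).exists_scrambled
    (logisticCoding_const_false_ne_const_true hμ)
  refine ⟨δ, hδ, ?_⟩
  rw [← range_logisticCoding hμ]
  rintro _ ⟨a, rfl⟩ V - ⟨U, hU, rfl⟩ ⟨_, ⟨c, rfl⟩, hcU⟩
  obtain ⟨ε, hε, hball⟩ := Metric.isOpen_iff.1 hU _ hcU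
  obtain ⟨w, hwc, hlimsup, hliminf⟩ := hscrambled a c ε hε
  exact ⟨_, ⟨⟨w, rfl⟩, hball hwc⟩, by simpa only [Real.dist_eq] using hlimsup,
    by simpa only [Real.dist_eq] using hliminf⟩
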